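/- Let S be an inverse ∧-semigroup with zero, and for s ∈ S let 𝒴_s be the set of ultrafilters on S containing s. If the join s ∨ t exists in the Γ-graded-Boolean inverse ∧-semigroup S, then 𝒴_{s∨t} = 𝒴_s ∪ 𝒴_t. -/
import Mathlib


/-- An element is idempotent. -/
def IsIdemE {S : Type*} [Mul S] (e : S) : Prop := e * e = e

/-- `S` is an inverse semigroup with zero, `inv` giving the unique inverse of each element. -/
structure IsInvSemigroupZ (S : Type*) [Semigroup S] [Zero S] (inv : S → S) : Prop where
  zero_mul : ∀ s : S, 0 * s = 0
  mul_zero : ∀ s : S, s * 0 = 0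
  mul_inv_mul : ∀ s : S, s * inv s * s = s
  inv_mul_inv : ∀ s : S, inv s * s * inv s = inv s
  inv_unique : ∀ s t : S, s * t * s = s → t * s * t = t → t = inv s

/-- The natural partial order on an inverse semigroup: `s ≤ t` iff `s = t * u` for an idempotent `u`. -/
def natle {S : Type*} [Semigroup S] (s t : S) : Prop := ∃ u : S, IsIdemE u ∧ s = t * u

/-- A `Γ`-grading on `S` (the value of `deg` at `0` is irrelevant). -/
def IsGradingZ {S : Type*} [Semigroup S] [Zero S] {Γ : Type*} [Group Γ] (deg : S → Γ) : Prop :=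
  ∀ s t : S, s * t ≠ 0 → deg (s * t) = deg s * deg t

/-- Membership in the component `S_α = deg⁻¹(α) ∪ {0}`. -/
def memGradeZ {S : Type*} [Zero S] {Γ : Type*} (deg : S → Γ) (α : Γ) (s : S) : Prop :=
  s = 0 ∨ deg s = α

/-- `s` and `t` are compatible: `s⁻¹t` and `st⁻¹` are idempotent. -/
def CompatZ {S : Type*} [Semigroup S] (inv : S → S) (s t : S) : Prop :=
  IsIdemE (inv s * t) ∧ IsIdemE (s * inv t)

/-- `s` and `t` are orthogonal: `s⁻¹t = 0 = st⁻¹`. -/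
def OrthogZ {S : Type*} [Semigroup S] [Zero S] (inv : S → S) (s t : S) : Prop :=
  inv s * t = 0 ∧ s * inv t = 0

/-- `j` is the join (least upper bound) of `A` in the natural partial order. -/
def IsJoinZ {S : Type*} [Semigroup S] (A : Set S) (j : S) : Prop :=
  (∀ a ∈ A, natle a j) ∧ ∀ b : S, (∀ a ∈ A, natle a b) → natle j b

/-- `m` is the meet (greatest lower bound) of `A` in the natural partial order. -/
def IsMeetZ {S : Type*} [Semigroup S] (A : Set S) (m : S) : Prop :=
  (∀ a ∈ A, natle m a) ∧ ∀ b : S, (∀ a ∈ A, natle b a) → natle b m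

/-- A filter on `S` with respect to the natural partial order. -/
structure IsFilterZ {S : Type*} [Semigroup S] [Zero S] (X : Set S) : Prop where
  nonempty : X.Nonempty
  directed : ∀ x ∈ X, ∀ y ∈ X, ∃ z ∈ X, natle z x ∧ natle z y
  upward : ∀ x ∈ X, ∀ y : S, natle x y → y ∈ X
  zero_not_mem : (0 : S) ∉ X

/-- An ultrafilter on `S`: a maximal filter. -/
def IsUltraZ {S : Type*} [Semigroup S] [Zero S] (X : Set S) : Prop :=
  IsFilterZ X ∧ ∀ Y : Set S, IsFilterZ Y → X ⊆ Y → Y = X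

/-- The upward closure of a subset. -/
def upsetZ {S : Type*} [Semigroup S] (Y : Set S) : Set S := {x : S | ∃ y ∈ Y, natle y x}

/-- The set of ultrafilters on `S` containing `s`. -/
def USetZ {S : Type*} [Semigroup S] [Zero S] (s : S) : Set (Set S) :=
  {X : Set S | IsUltraZ X ∧ s ∈ X}

/-- `S` is a `Γ`-graded-Boolean inverse ∧-semigroup, with meet operation `meet`. -/
structure IsGradedBooleanZ {S : Type*} [Semigroup S] [Zero S] {Γ : Type*} [Group Γ]
    (inv : S → S) (deg : S → Γ) (meet : S → S → S) : Prop where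
  invSemi : IsInvSemigroupZ S inv
  grading : IsGradingZ deg
  meet_is : ∀ s t : S, IsMeetZ {s, t} (meet s t)
  joins : ∀ (α : Γ) (A : Finset S), A.Nonempty →
    (∀ a ∈ A, memGradeZ deg α a) → (∀ a ∈ A, ∀ b ∈ A, CompatZ inv a b) →
    ∃ j : S, IsJoinZ (↑A) j
  mul_join_left : ∀ (α : Γ) (A : Finset S), A.Nonempty →
    (∀ a ∈ A, memGradeZ deg α a) → (∀ a ∈ A, ∀ b ∈ A, CompatZ inv a b) →
    ∀ s j : S, IsJoinZ (↑A) j → IsJoinZ ((fun a => s * a) '' ↑A) (s * j)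
  mul_join_right : ∀ (α : Γ) (A : Finset S), A.Nonempty →
    (∀ a ∈ A, memGradeZ deg α a) → (∀ a ∈ A, ∀ b ∈ A, CompatZ inv a b) →
    ∀ s j : S, IsJoinZ (↑A) j → IsJoinZ ((fun a => a * s) '' ↑A) (j * s)
  idem_joins : ∀ e f : S, IsIdemE e → IsIdemE f → ∃ j : S, IsIdemE j ∧ IsJoinZ {e, f} j
  distrib : ∀ e f g j : S, IsIdemE e → IsIdemE f → IsIdemE g →
    IsJoinZ {f, g} j → IsJoinZ {e * f, e * g} (e * j)
  complemented : ∀ e f : S, IsIdemE e → IsIdemE f → natle f e →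
    ∃ g : S, IsIdemE g ∧ natle g e ∧ f * g = 0 ∧ IsJoinZ {f, g} e

set_option linter.unusedSectionVars false

section AuxInv

variable {S : Type*} [Semigroup S] [Zero S] {inv : S → S}

lemma absorbE {e : S} (he : IsIdemE e) (x : S) : e * (e * x) = e * x := by
  rw [← mul_assoc, he]

variable (hI : IsInvSemigroupZ S inv)
include hI

lemma inv_mul_self_idem (s : S) : IsIdemE (inv s * s) := by
  show inv s * s * (inv s * s) = inv s * s
  calc inv s * s * (inv s * s) = inv s * (s * inv s * s) := by simp only [mul_assoc]
    _ = inv s * s := by rw [hI.mul_inv_mul]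

lemma mul_inv_self_idem (s : S) : IsIdemE (s * inv s) := by
  show s * inv s * (s * inv s) = s * inv s
  calc s * inv s * (s * inv s) = (s * inv s * s) * inv s := by simp only [mul_assoc]
    _ = s * inv s := by rw [hI.mul_inv_mul]

lemma idem_inv {e : S} (he : IsIdemE e) : inv e = e :=
  (hI.inv_unique e e (by rw [he, he]) (by rw [he, he])).symm

lemma idem_mul {e f : S} (he : IsIdemE e) (hf : IsIdemE f) : IsIdemE (e * f) := by
  set a := e * f with ha
  set b := inv a with hb
  have hba : a * b * a = a := hI.mul_inv_mul a
  have hab : b * a * b = b := hI.inv_mul_inv a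
  have hEq : f * b * e = b := by
    apply hI.inv_unique
    · calc a * (f * b * e) * a = e * (f * (f * (b * (e * (e * f))))) := by
            simp only [ha, mul_assoc]
        _ = e * (f * (b * (e * f))) := by rw [absorbE hf, absorbE he]
        _ = a * b * a := by simp only [ha, mul_assoc]
        _ = a := hba
    · calc f * b * e * a * (f * b * e)
          = f * (b * (e * (e * (f * (f * (b * e)))))) := by simp only [ha, mul_assoc]
        _ = f * (b * (e * (f * (b * e)))) := by rw [absorbE he, absorbE hf]
        _ = f * (b * a * b) * e := by simp only [ha, mul_assoc]
        _ = f * b * e := by rw [hab]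
  have hbb : IsIdemE b := by
    show b * b = b
    calc b * b = (f * b * e) * (f * b * e) := by rw [hEq]
      _ = f * (b * a * b) * e := by simp only [ha, mul_assoc]
      _ = f * b * e := by rw [hab]
      _ = b := hEq
  have : a = inv b := hI.inv_unique b a hab hba
  rw [ha] at this
  show a * a = a
  rw [ha, this, idem_inv hI hbb]
  exact hbb

lemma idem_comm {e f : S} (he : IsIdemE e) (hf : IsIdemE f) : e * f = f * e := by
  have hef := idem_mul hI he hf
  have h1 : e * f * (f * e) * (e * f) = e * f := by
    calc e * f * (f * e) * (e * f) = e * (f * (f * (e * (e * f)))) := by simp only [mul_assoc]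
      _ = e * (f * (e * f)) := by rw [absorbE hf, absorbE he]
      _ = (e * f) * (e * f) := by simp only [mul_assoc]
      _ = e * f := hef
  have h2 : f * e * (e * f) * (f * e) = f * e := by
    have hfe := idem_mul hI hf he
    calc f * e * (e * f) * (f * e) = f * (e * (e * (f * (f * e)))) := by simp only [mul_assoc]
      _ = f * (e * (f * e)) := by rw [absorbE he, absorbE hf]
      _ = (f * e) * (f * e) := by simp only [mul_assoc]
      _ = f * e := hfe
  have := hI.inv_unique (e * f) (f * e) h1 h2
  rw [idem_inv hI hef] at this
  exact this.symm

lemma inv_mul_rev (a b : S) : inv (a * b) = inv b * inv a := by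
  symm
  apply hI.inv_unique
  · calc a * b * (inv b * inv a) * (a * b)
        = a * ((b * inv b) * (inv a * a)) * b := by simp only [mul_assoc]
      _ = a * ((inv a * a) * (b * inv b)) * b := by
          rw [idem_comm hI (mul_inv_self_idem hI b) (inv_mul_self_idem hI a)]
      _ = (a * inv a * a) * (b * inv b * b) := by simp only [mul_assoc]
      _ = a * b := by rw [hI.mul_inv_mul, hI.mul_inv_mul]
  · calc inv b * inv a * (a * b) * (inv b * inv a)
        = inv b * ((inv a * a) * (b * inv b)) * inv a := by simp only [mul_assoc]
      _ = inv b * ((b * inv b) * (inv a * a)) * inv a := by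
          rw [idem_comm hI (inv_mul_self_idem hI a) (mul_inv_self_idem hI b)]
      _ = (inv b * b * inv b) * (inv a * a * inv a) := by simp only [mul_assoc]
      _ = inv b * inv a := by rw [hI.inv_mul_inv, hI.inv_mul_inv]

lemma zero_idem : IsIdemE (0 : S) := hI.mul_zero 0

lemma natle_refl (s : S) : natle s s :=
  ⟨inv s * s, inv_mul_self_idem hI s, by rw [← mul_assoc, hI.mul_inv_mul]⟩

lemma natle_trans {a b c : S} (h1 : natle a b) (h2 : natle b c) : natle a c := by
  obtain ⟨u, hu, hau⟩ := h1
  obtain ⟨v, hv, hbv⟩ := h2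
  exact ⟨v * u, idem_mul hI hv hu, by rw [hau, hbv, mul_assoc]⟩

lemma natle_zero (x : S) : natle 0 x := ⟨0, zero_idem hI, (hI.mul_zero x).symm⟩

lemma natle_eq_zero {a : S} (h : natle a 0) : a = 0 := by
  obtain ⟨u, -, hau⟩ := h
  rw [hau, hI.zero_mul]

lemma natle_mul_left (c : S) {a b : S} (h : natle a b) : natle (c * a) (c * b) := by
  obtain ⟨u, hu, hau⟩ := h
  exact ⟨u, hu, by rw [hau, mul_assoc]⟩

lemma conj_idem {u : S} (hu : IsIdemE u) (c : S) : IsIdemE (inv c * (u * c)) := by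
  show inv c * (u * c) * (inv c * (u * c)) = inv c * (u * c)
  calc inv c * (u * c) * (inv c * (u * c))
      = inv c * (u * ((c * inv c) * u)) * c := by simp only [mul_assoc]
    _ = inv c * ((c * inv c) * (u * u)) * c := by
        rw [show u * ((c * inv c) * u) = (c * inv c) * (u * u) from by
          rw [← mul_assoc, idem_comm hI hu (mul_inv_self_idem hI c), mul_assoc]]
    _ = (inv c * c * inv c) * (u * c) := by rw [hu]; simp only [mul_assoc]
    _ = inv c * (u * c) := by rw [hI.inv_mul_inv]

lemma conj_eq {u : S} (hu : IsIdemE u) (c : S) : c * (inv c * (u * c)) = u * c := by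
  calc c * (inv c * (u * c)) = ((c * inv c) * u) * c := by simp only [mul_assoc]
    _ = (u * (c * inv c)) * c := by rw [idem_comm hI (mul_inv_self_idem hI c) hu]
    _ = u * (c * inv c * c) := by simp only [mul_assoc]
    _ = u * c := by rw [hI.mul_inv_mul]

lemma idem_mul_le {e : S} (he : IsIdemE e) (x : S) : natle (e * x) x :=
  ⟨inv x * (e * x), conj_idem hI he x, (conj_eq hI he x).symm⟩

lemma natle_mul_right (c : S) {a b : S} (h : natle a b) : natle (a * c) (b * c) := by
  obtain ⟨u, hu, hau⟩ := h
  refine ⟨inv c * (u * c), conj_idem hI hu c, ?_⟩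
  rw [hau, mul_assoc, mul_assoc, conj_eq hI hu c]

lemma natle_inv {a b : S} (h : natle a b) : natle (inv a) (inv b) := by
  obtain ⟨u, hu, hau⟩ := h
  rw [hau, inv_mul_rev hI, idem_inv hI hu]
  exact idem_mul_le hI hu (inv b)

lemma natle_eq_self_mul {a b : S} (h : natle a b) : a = b * (inv a * a) := by
  obtain ⟨u, hu, hau⟩ := h
  have hinva : inv a = u * inv b := by rw [hau, inv_mul_rev hI, idem_inv hI hu]
  rw [hinva, hau]
  symm
  calc b * (u * inv b * (b * u))
      = b * (u * ((inv b * b) * u)) := by simp only [mul_assoc]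
    _ = b * ((inv b * b) * (u * u)) := by
        rw [show u * ((inv b * b) * u) = (inv b * b) * (u * u) from by
          rw [← mul_assoc, idem_comm hI hu (inv_mul_self_idem hI b), mul_assoc]]
    _ = b * (inv b * b) * (u * u) := by simp only [mul_assoc]
    _ = b * u := by rw [hu, ← mul_assoc, hI.mul_inv_mul]

lemma natle_mul_inv_right {a b : S} (h : natle a b) : a * (inv b * b) = a := by
  have h1 := natle_eq_self_mul hI h
  calc a * (inv b * b) = (b * (inv a * a)) * (inv b * b) := by conv_lhs => rw [h1]
    _ = b * ((inv a * a) * (inv b * b)) := by simp only [mul_assoc]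
    _ = b * ((inv b * b) * (inv a * a)) := by
        rw [idem_comm hI (inv_mul_self_idem hI a) (inv_mul_self_idem hI b)]
    _ = (b * (inv b * b)) * (inv a * a) := by simp only [mul_assoc]
    _ = b * (inv a * a) := by
        rw [show b * (inv b * b) = b from by rw [← mul_assoc, hI.mul_inv_mul]]
    _ = a := h1.symm

end AuxInv

section Aux2

variable {S : Type*} [Semigroup S] [Zero S] {inv : S → S}

lemma idem_grade {Γ : Type*} [Group Γ] {deg : S → Γ} (hG : IsGradingZ deg)
    {e : S} (he : IsIdemE e) : memGradeZ deg 1 e := by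
  by_cases h0 : e = 0
  · exact Or.inl h0
  · refine Or.inr ?_
    have h := hG e e (by rw [he]; exact h0)
    rw [he] at h
    have := mul_left_cancel (show deg e * 1 = deg e * deg e by rw [mul_one, ← h])
    exact this.symm

lemma meet_le_left {meet : S → S → S} (hm : ∀ s t : S, IsMeetZ {s, t} (meet s t))
    (s t : S) : natle (meet s t) s :=
  (hm s t).1 s (Set.mem_insert _ _)

lemma meet_le_right {meet : S → S → S} (hm : ∀ s t : S, IsMeetZ {s, t} (meet s t))
    (s t : S) : natle (meet s t) t :=
  (hm s t).1 t (Set.mem_insert_of_mem _ rfl)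

lemma le_meet {meet : S → S → S} (hm : ∀ s t : S, IsMeetZ {s, t} (meet s t))
    {b s t : S} (h1 : natle b s) (h2 : natle b t) : natle b (meet s t) := by
  refine (hm s t).2 b ?_
  rintro a ha
  rcases ha with rfl | ha
  · exact h1
  · rw [Set.mem_singleton_iff] at ha; subst ha; exact h2

variable (hI : IsInvSemigroupZ S inv)
include hI

lemma compat_idem {e f : S} (he : IsIdemE e) (hf : IsIdemE f) : CompatZ inv e f :=
  ⟨by rw [idem_inv hI he]; exact idem_mul hI he hf,
   by rw [idem_inv hI hf]; exact idem_mul hI he hf⟩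

lemma ultra_mem_of_meet {meet : S → S → S} (hm : ∀ s t : S, IsMeetZ {s, t} (meet s t))
    {X : Set S} (hX : IsUltraZ X) {s : S} (h : ∀ x ∈ X, meet s x ≠ 0) : s ∈ X := by
  set Y : Set S := {y | ∃ x ∈ X, natle (meet s x) y} with hY
  have hXY : X ⊆ Y := fun x hx => ⟨x, hx, meet_le_right hm s x⟩
  have hYF : IsFilterZ Y := by
    constructor
    · obtain ⟨x0, hx0⟩ := hX.1.nonempty
      exact ⟨x0, hXY hx0⟩
    · rintro y1 ⟨x1, hx1, h1⟩ y2 ⟨x2, hx2, h2⟩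
      obtain ⟨x, hx, hxx1, hxx2⟩ := hX.1.directed x1 hx1 x2 hx2
      refine ⟨meet s x, ⟨x, hx, natle_refl hI _⟩, ?_, ?_⟩
      · exact natle_trans hI (le_meet hm (meet_le_left hm s x)
          (natle_trans hI (meet_le_right hm s x) hxx1)) h1
      · exact natle_trans hI (le_meet hm (meet_le_left hm s x)
          (natle_trans hI (meet_le_right hm s x) hxx2)) h2
    · rintro y ⟨x, hx, hxy⟩ y' hyy'
      exact ⟨x, hx, natle_trans hI hxy hyy'⟩
    · rintro ⟨x, hx, hx0⟩
      exact h x hx (natle_eq_zero hI hx0)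
  have hYX := hX.2 Y hYF hXY
  rw [← hYX]
  obtain ⟨x0, hx0⟩ := hX.1.nonempty
  exact ⟨x0, hx0, meet_le_left hm s x0⟩

end Aux2


theorem uset_join_eq_union
    {S Γ : Type*} [Semigroup S] [Zero S] [Group Γ]
    (inv : S → S) (deg : S → Γ) (meet : S → S → S)
    (hB : IsGradedBooleanZ inv deg meet)
    {s t j : S} (hj : IsJoinZ {s, t} j) :
    USetZ j = USetZ s ∪ USetZ t := by
  classical
  have hI := hB.invSemi
  have hsj : natle s j := hj.1 s (Set.mem_insert _ _)
  have htj : natle t j := hj.1 t (Set.mem_insert_of_mem _ rfl)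
  ext X
  simp only [USetZ, Set.mem_setOf_eq, Set.mem_union]
  constructor
  · rintro ⟨hU, hjX⟩
    by_contra hcon
    push_neg at hcon
    obtain ⟨hns, hnt⟩ := hcon
    have hsX : s ∉ X := hns hU
    have htX : t ∉ X := hnt hU
    have hs0 : ∃ x ∈ X, meet s x = 0 := by
      by_contra hc; push_neg at hc
      exact hsX (ultra_mem_of_meet hI hB.meet_is hU hc)
    have ht0 : ∃ y ∈ X, meet t y = 0 := by
      by_contra hc; push_neg at hc
      exact htX (ultra_mem_of_meet hI hB.meet_is hU hc)
    obtain ⟨x, hxX, hx0⟩ := hs0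
    obtain ⟨y, hyX, hy0⟩ := ht0
    obtain ⟨z1, hz1X, hz1x, hz1y⟩ := hU.1.directed x hxX y hyX
    obtain ⟨z, hzX, hzz1, hzj⟩ := hU.1.directed z1 hz1X j hjX
    have hzx := natle_trans hI hzz1 hz1x
    have hzy := natle_trans hI hzz1 hz1y
    have hfI : IsIdemE (inv z * z) := inv_mul_self_idem hI z
    have hzf : z = j * (inv z * z) := natle_eq_self_mul hI hzj
    -- s * f = 0 and t * f = 0
    have hsf : s * (inv z * z) = 0 := by
      have h1 : natle (s * (inv z * z)) z := by
        have h := natle_mul_right hI (inv z * z) hsj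
        rw [← hzf] at h; exact h
      have h2 : natle (s * (inv z * z)) x := natle_trans hI h1 hzx
      have h3 : natle (s * (inv z * z)) s := ⟨inv z * z, hfI, rfl⟩
      have h4 := le_meet hB.meet_is h3 h2
      rw [hx0] at h4
      exact natle_eq_zero hI h4
    have htf : t * (inv z * z) = 0 := by
      have h1 : natle (t * (inv z * z)) z := by
        have h := natle_mul_right hI (inv z * z) htj
        rw [← hzf] at h; exact h
      have h2 : natle (t * (inv z * z)) y := natle_trans hI h1 hzy
      have h3 : natle (t * (inv z * z)) t := ⟨inv z * z, hfI, rfl⟩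
      have h4 := le_meet hB.meet_is h3 h2
      rw [hy0] at h4
      exact natle_eq_zero hI h4
    -- complement of f inside F := inv j * j
    have hFI : IsIdemE (inv j * j) := inv_mul_self_idem hI j
    have hfF : natle (inv z * z) (inv j * j) :=
      natle_trans hI (natle_mul_right hI z (natle_inv hI hzj))
        (natle_mul_left hI (inv j) hzj)
    obtain ⟨g, hgI, hgF, hfg, hjoinfg⟩ := hB.complemented (inv j * j) (inv z * z) hFI hfI hfF
    have hsetA : (↑({inv z * z, g} : Finset S) : Set S) = ({inv z * z, g} : Set S) := by simp
    have hAne : ({inv z * z, g} : Finset S).Nonempty := ⟨inv z * z, Finset.mem_insert_self _ _⟩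
    have hAg : ∀ a ∈ ({inv z * z, g} : Finset S), memGradeZ deg 1 a := by
      intro a ha
      rcases Finset.mem_insert.mp ha with rfl | ha
      · exact idem_grade hB.grading hfI
      · rw [Finset.mem_singleton] at ha; subst ha
        exact idem_grade hB.grading hgI
    have hidem : ∀ a ∈ ({inv z * z, g} : Finset S), IsIdemE a := by
      intro a ha
      rcases Finset.mem_insert.mp ha with rfl | ha
      · exact hfI
      · rw [Finset.mem_singleton] at ha; subst ha; exact hgI
    have hAc : ∀ a ∈ ({inv z * z, g} : Finset S), ∀ b ∈ ({inv z * z, g} : Finset S),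
        CompatZ inv a b := fun a ha b hb => compat_idem hI (hidem a ha) (hidem b hb)
    have hjoinA : IsJoinZ (↑({inv z * z, g} : Finset S)) (inv j * j) := by
      rw [hsetA]; exact hjoinfg
    -- key step
    have key : ∀ w : S, natle w j → w * (inv z * z) = 0 → natle w (j * g) := by
      intro w hwj hwf
      have hwF : w * (inv j * j) = w := natle_mul_inv_right hI hwj
      have hmj := hB.mul_join_left 1 {inv z * z, g} hAne hAg hAc w (inv j * j) hjoinA
      rw [hsetA] at hmj
      have himg : ((fun a => w * a) '' ({inv z * z, g} : Set S))
          = {w * (inv z * z), w * g} := by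
        simp [Set.image_insert_eq]
      rw [himg, hwf, hwF] at hmj
      have hle : natle w (w * g) := by
        refine hmj.2 (w * g) ?_
        rintro a ha
        rcases ha with rfl | ha
        · exact natle_zero hI _
        · rw [Set.mem_singleton_iff] at ha; subst ha
          exact natle_refl hI _
      exact natle_trans hI hle (natle_mul_right hI g hwj)
    have hjjg : natle j (j * g) := by
      refine hj.2 (j * g) ?_
      rintro a ha
      rcases ha with rfl | ha
      · exact key _ hsj hsf
      · rw [Set.mem_singleton_iff] at ha; subst ha
        exact key _ htj htf
    have hz0 : z = 0 := by
      have h1 : natle (j * (inv z * z)) ((j * g) * (inv z * z)) :=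
        natle_mul_right hI (inv z * z) hjjg
      have h2 : (j * g) * (inv z * z) = 0 := by
        rw [mul_assoc, idem_comm hI hgI hfI, hfg, hI.mul_zero]
      rw [h2] at h1
      rw [hzf]
      exact natle_eq_zero hI h1
    exact hU.1.zero_not_mem (hz0 ▸ hzX)
  · rintro (⟨hU, hsX⟩ | ⟨hU, htX⟩)
    · exact ⟨hU, hU.1.upward s hsX j hsj⟩
    · exact ⟨hU, hU.1.upward t htX j htj⟩
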